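/- Let a : D\{0} → ℝ be smooth with Δa ≥ e^{2a} on the punctured unit disc (Gauss curvature of e^{2a}|dz|² at most −1). Let T > 0 and let u : D × [0,T] → ℝ be smooth and satisfy the Ricci flow equation ∂u/∂t = e^{−2u}Δu on D × [0,T], with u(z,0) ≤ a(z) for all 0 < |z| < 1. Then for all 0 < |z| < 1 and all t ∈ [0,T]: u(z,t) ≤ −ln(|z|·(−ln|z|)) + (1/2)ln(1+2t). -/

import Mathlib

open Complex Metric Set Filter Topology

/-- The flat Laplacian of `u : ℂ → ℝ` at `z`, i.e. `∂²u/∂x² + ∂²u/∂y²`. -/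
noncomputable def lap (u : ℂ → ℝ) (z : ℂ) : ℝ :=
  iteratedFDeriv ℝ 2 u z ![1, 1] + iteratedFDeriv ℝ 2 u z ![Complex.I, Complex.I]


/-- At a right endpoint max, one-sided derivative is nonneg. -/
lemma right_endpoint_deriv_nonneg {f : ℝ → ℝ} {t₀ c : ℝ} (ht : 0 < t₀)
    (hmax : ∀ t ∈ Icc (0:ℝ) t₀, f t ≤ f t₀)
    (hd : HasDerivWithinAt f c (Icc 0 t₀) t₀) : 0 ≤ c := by
  rw [hasDerivWithinAt_iff_tendsto_slope] at hd
  have hset : Icc (0:ℝ) t₀ \ {t₀} = Ico 0 t₀ := by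
    ext s
    simp only [mem_diff, mem_Icc, mem_singleton_iff, mem_Ico]
    constructor
    · rintro ⟨⟨h1, h2⟩, h3⟩; exact ⟨h1, lt_of_le_of_ne h2 h3⟩
    · rintro ⟨h1, h2⟩; exact ⟨⟨h1, h2.le⟩, h2.ne⟩
  rw [hset] at hd
  have hne : (𝓝[Ico (0:ℝ) t₀] t₀).NeBot := by
    refine mem_closure_iff_nhdsWithin_neBot.1 ?_
    rw [closure_Ico ht.ne]
    exact ⟨le_of_lt ht, le_refl _⟩
  refine ge_of_tendsto hd ?_
  filter_upwards [self_mem_nhdsWithin] with s hs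
  have h1 : f s - f t₀ ≤ 0 := sub_nonpos.2 (hmax s ⟨hs.1, hs.2.le⟩)
  have h2 : s - t₀ < 0 := sub_neg.2 hs.2
  rw [slope_def_field]
  exact div_nonneg_of_nonpos h1 h2.le

/-- 1-D second derivative test: at a local max, second derivative is nonpositive. -/
lemma second_deriv_nonpos {g g' : ℝ → ℝ} {d δ : ℝ} (hδ : 0 < δ)
    (hg : ∀ s ∈ Ioo (-δ) δ, HasDerivAt g (g' s) s)
    (hg' : HasDerivAt g' d 0)
    (hmax : IsLocalMax g 0) : d ≤ 0 := by
  by_contra hcon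
  push_neg at hcon
  have h0 : g' 0 = 0 := hmax.hasDerivAt_eq_zero (hg 0 ⟨by linarith, hδ⟩)
  have hslope : Tendsto (slope g' 0) (𝓝[≠] (0:ℝ)) (𝓝 d) :=
    hasDerivAt_iff_tendsto_slope.1 hg'
  have hev : ∀ᶠ s in 𝓝[≠] (0:ℝ), 0 < slope g' 0 s :=
    hslope.eventually (eventually_gt_nhds hcon)
  rw [eventually_nhdsWithin_iff] at hev
  obtain ⟨δ₁, hδ₁, hb₁⟩ := Metric.eventually_nhds_iff.1 hev
  obtain ⟨δ₂, hδ₂, hb₂⟩ := Metric.eventually_nhds_iff.1 hmax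
  set r := min δ (min δ₁ δ₂) / 2 with hr
  have hrpos : 0 < r := by positivity
  have hrδ : r < δ := by
    have : min δ (min δ₁ δ₂) ≤ δ := min_le_left _ _
    simp only [hr]; linarith
  have hrδ₁ : r < δ₁ := by
    have h1 : min δ (min δ₁ δ₂) ≤ δ₁ := le_trans (min_le_right _ _) (min_le_left _ _)
    simp only [hr]; linarith
  have hrδ₂ : r < δ₂ := by
    have h1 : min δ (min δ₁ δ₂) ≤ δ₂ := le_trans (min_le_right _ _) (min_le_right _ _)
    simp only [hr]; linarith
  have hmono : StrictMonoOn g (Icc 0 r) := by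
    refine strictMonoOn_of_deriv_pos (convex_Icc 0 r) ?_ ?_
    · intro s hs
      simp only [mem_Icc] at hs
      have hs' : s ∈ Ioo (-δ) δ := ⟨by linarith [hs.1], by linarith [hs.2]⟩
      exact (hg s hs').continuousAt.continuousWithinAt
    · intro s hs
      rw [interior_Icc] at hs
      have hs' : s ∈ Ioo (-δ) δ := ⟨by linarith [hs.1], by linarith [hs.2]⟩
      rw [(hg s hs').deriv]
      have hd1 : dist s 0 < δ₁ := by
        rw [Real.dist_eq, sub_zero, abs_of_pos hs.1]; linarith [hs.2]
      have hpos := hb₁ hd1 (by simpa using hs.1.ne')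
      rw [slope_def_field, h0] at hpos
      have : 0 < (g' s - 0) / (s - 0) := hpos
      rw [sub_zero, sub_zero] at this
      have := mul_pos this hs.1
      rwa [div_mul_cancel₀ _ hs.1.ne'] at this
  have hlt : g 0 < g r := hmono ⟨le_refl _, hrpos.le⟩ ⟨hrpos.le, le_refl _⟩ hrpos
  have : g r ≤ g 0 := by
    refine hb₂ ?_
    simp only [Metric.mem_ball, Real.dist_eq, sub_zero, abs_of_pos hrpos]
    exact hrδ₂
  linarith


lemma line_hasDerivAt {f : ℂ → ℝ} {U : Set ℂ} (hU : IsOpen U)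
    (hf : ContDiffOn ℝ 2 f U) {z v : ℂ} {s : ℝ} (hz : z + s • v ∈ U) :
    HasDerivAt (fun r : ℝ => f (z + r • v)) (fderiv ℝ f (z + s • v) v) s := by
  have hdiff : DifferentiableAt ℝ f (z + s • v) :=
    (hf.contDiffAt (hU.mem_nhds hz)).differentiableAt (by norm_num)
  have hline : HasDerivAt (fun r : ℝ => z + r • v) v s := by
    simpa using ((hasDerivAt_id s).smul_const v).const_add z
  exact hdiff.hasFDerivAt.comp_hasDerivAt s hline

lemma line_hasDerivAt2 {f : ℂ → ℝ} {U : Set ℂ} (hU : IsOpen U)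
    (hf : ContDiffOn ℝ 2 f U) {z : ℂ} (hz : z ∈ U) (v : ℂ) :
    HasDerivAt (fun s : ℝ => fderiv ℝ f (z + s • v) v)
      (iteratedFDeriv ℝ 2 f z ![v, v]) 0 := by
  rw [iteratedFDeriv_two_apply]
  simp only [Matrix.cons_val_zero, Matrix.cons_val_one, Matrix.head_cons]
  have hca : ContDiffAt ℝ 2 f z := hf.contDiffAt (hU.mem_nhds hz)
  have h2 : DifferentiableAt ℝ (fderiv ℝ f) z := by
    have := hca.fderiv_right (m := 1) (by norm_num)
    exact this.differentiableAt (by norm_num)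
  have hline : HasDerivAt (fun s : ℝ => z + s • v) v 0 := by
    simpa using ((hasDerivAt_id (0:ℝ)).smul_const v).const_add z
  have h0 : z + (0:ℝ) • v = z := by simp
  have h2' : HasFDerivAt (fderiv ℝ f) (fderiv ℝ (fderiv ℝ f) z) (z + (0:ℝ) • v) := by
    rw [h0]; exact h2.hasFDerivAt
  have hcomp : HasDerivAt (fun s : ℝ => fderiv ℝ f (z + s • v))
      (fderiv ℝ (fderiv ℝ f) z v) 0 := h2'.comp_hasDerivAt 0 hline
  have := (ContinuousLinearMap.apply ℝ ℝ v).hasFDerivAt.comp_hasDerivAt 0 hcomp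
  exact this

/-- Compute `iteratedFDeriv 2 f z ![v,v]` from explicit line derivatives. -/
lemma iteratedFDeriv_line {f : ℂ → ℝ} {U : Set ℂ} (hU : IsOpen U)
    (hf : ContDiffOn ℝ 2 f U) {z v : ℂ} (hz : z ∈ U)
    {G' : ℝ → ℝ} {d : ℝ}
    (hG : ∀ᶠ s in 𝓝 (0:ℝ), HasDerivAt (fun r : ℝ => f (z + r • v)) (G' s) s)
    (hG2 : HasDerivAt G' d 0) :
    iteratedFDeriv ℝ 2 f z ![v, v] = d := by
  have key := line_hasDerivAt2 hU hf hz v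
  have hmem : ∀ᶠ s : ℝ in 𝓝 0, z + s • v ∈ U := by
    have hc : Continuous (fun s : ℝ => z + s • v) := by continuity
    have : z + (0:ℝ) • v ∈ U := by simpa using hz
    exact hc.continuousAt.preimage_mem_nhds (hU.mem_nhds this)
  have hev : (fun s : ℝ => fderiv ℝ f (z + s • v) v) =ᶠ[𝓝 0] G' := by
    filter_upwards [hmem, hG] with s h1 h2
    exact ((line_hasDerivAt hU hf h1).unique h2)
  exact key.unique (hG2.congr_of_eventuallyEq hev)

/-- At a local max of `f - g`, second directional derivatives compare. -/
lemma iteratedFDeriv_le_of_localMax {f g : ℂ → ℝ} {U : Set ℂ} (hU : IsOpen U)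
    (hf : ContDiffOn ℝ 2 f U) (hg : ContDiffOn ℝ 2 g U) {z : ℂ} (hz : z ∈ U)
    (hmax : IsLocalMax (fun w => f w - g w) z) (v : ℂ) :
    iteratedFDeriv ℝ 2 f z ![v, v] ≤ iteratedFDeriv ℝ 2 g z ![v, v] := by
  have hmem : ∀ᶠ s : ℝ in 𝓝 0, z + s • v ∈ U := by
    have hc : Continuous (fun s : ℝ => z + s • v) := by continuity
    have : z + (0:ℝ) • v ∈ U := by simpa using hz
    exact hc.continuousAt.preimage_mem_nhds (hU.mem_nhds this)
  obtain ⟨δ, hδ, hball⟩ := Metric.eventually_nhds_iff.1 hmem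
  have hlinemax : IsLocalMax (fun s : ℝ => f (z + s • v) - g (z + s • v)) 0 := by
    have hc : Continuous (fun s : ℝ => z + s • v) := by continuity
    have h0 : z + (0:ℝ) • v = z := by simp
    have hmax' : IsLocalMax (fun w => f w - g w) ((fun s : ℝ => z + s • v) 0) := by
      simpa [h0] using hmax
    have := IsLocalMax.comp_continuous (g := fun s : ℝ => z + s • v) (b := (0:ℝ)) hmax' hc.continuousAt
    exact this
  have hd2 : HasDerivAt (fun s : ℝ => fderiv ℝ f (z + s • v) v - fderiv ℝ g (z + s • v) v)
      (iteratedFDeriv ℝ 2 f z ![v, v] - iteratedFDeriv ℝ 2 g z ![v, v]) 0 :=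
    (line_hasDerivAt2 hU hf hz v).sub (line_hasDerivAt2 hU hg hz v)
  have hd1 : ∀ s ∈ Ioo (-δ) δ,
      HasDerivAt (fun r : ℝ => f (z + r • v) - g (z + r • v))
        (fderiv ℝ f (z + s • v) v - fderiv ℝ g (z + s • v) v) s := by
    intro s hs
    have hmem' : z + s • v ∈ U := by
      refine hball ?_
      rw [Real.dist_eq, sub_zero]
      rcases hs with ⟨h1, h2⟩
      rw [abs_lt]; exact ⟨h1, h2⟩
    exact (line_hasDerivAt hU hf hmem').sub (line_hasDerivAt hU hg hmem')
  have := second_deriv_nonpos hδ hd1 hd2 hlinemax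
  linarith

lemma lap_le_of_localMax {f g : ℂ → ℝ} {U : Set ℂ} (hU : IsOpen U)
    (hf : ContDiffOn ℝ 2 f U) (hg : ContDiffOn ℝ 2 g U) {z : ℂ} (hz : z ∈ U)
    (hmax : IsLocalMax (fun w => f w - g w) z) : lap f z ≤ lap g z := by
  have h1 := iteratedFDeriv_le_of_localMax hU hf hg hz hmax 1
  have h2 := iteratedFDeriv_le_of_localMax hU hf hg hz hmax Complex.I
  unfold lap
  linarith


/-- slope of barrier profile: `F(t) = log β − t − log (sin (β (t − lε)))`. -/
noncomputable def Fb (lε β t : ℝ) : ℝ :=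
  Real.log β - t - Real.log (Real.sin (β * (t - lε)))

noncomputable def Fb' (lε β t : ℝ) : ℝ :=
  -1 - β * Real.cos (β * (t - lε)) / Real.sin (β * (t - lε))

noncomputable def Vb (lε β : ℝ) (z : ℂ) : ℝ := Fb lε β (Real.log (‖z‖))

lemma Fb_hasDerivAt {lε β t : ℝ} (hs : Real.sin (β * (t - lε)) ≠ 0) :
    HasDerivAt (Fb lε β) (Fb' lε β t) t := by
  have h1 : HasDerivAt (fun t : ℝ => β * (t - lε)) β t := by
    simpa using ((hasDerivAt_id t).sub_const lε).const_mul β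
  have h2 : HasDerivAt (fun t : ℝ => Real.sin (β * (t - lε)))
      (Real.cos (β * (t - lε)) * β) t := (Real.hasDerivAt_sin _).comp t h1
  have h3 : HasDerivAt (fun t : ℝ => Real.log (Real.sin (β * (t - lε))))
      (Real.cos (β * (t - lε)) * β / Real.sin (β * (t - lε))) t := h2.log hs
  have h4 := ((hasDerivAt_const t (Real.log β)).sub (hasDerivAt_id t)).sub h3
  refine h4.congr_deriv ?_
  unfold Fb'; ring

lemma Fb'_hasDerivAt {lε β t : ℝ} (hs : Real.sin (β * (t - lε)) ≠ 0) :
    HasDerivAt (Fb' lε β) (β ^ 2 / Real.sin (β * (t - lε)) ^ 2) t := by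
  have h1 : HasDerivAt (fun t : ℝ => β * (t - lε)) β t := by
    simpa using ((hasDerivAt_id t).sub_const lε).const_mul β
  have hsin : HasDerivAt (fun t : ℝ => Real.sin (β * (t - lε)))
      (Real.cos (β * (t - lε)) * β) t := (Real.hasDerivAt_sin _).comp t h1
  have hcos : HasDerivAt (fun t : ℝ => β * Real.cos (β * (t - lε)))
      (β * (-Real.sin (β * (t - lε)) * β)) t :=
    (((Real.hasDerivAt_cos _).comp t h1)).const_mul β
  have hdiv := hcos.div hsin hs
  have h4 := (hasDerivAt_const t (-1 : ℝ)).sub hdiv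
  refine h4.congr_deriv ?_
  have hkey : β * (-Real.sin (β * (t - lε)) * β) * Real.sin (β * (t - lε)) -
      β * Real.cos (β * (t - lε)) * (Real.cos (β * (t - lε)) * β)
      = -β ^ 2 * (Real.sin (β * (t - lε)) ^ 2 + Real.cos (β * (t - lε)) ^ 2) := by ring
  rw [hkey, Real.sin_sq_add_cos_sq]
  ring

/-- open annulus -/
def annA (lε lR : ℝ) : Set ℂ :=
  {z : ℂ | Real.exp lε < ‖z‖ ∧ ‖z‖ < Real.exp lR}

lemma annA_open (lε lR : ℝ) : IsOpen (annA lε lR) := by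
  have : annA lε lR = (fun z : ℂ => ‖z‖) ⁻¹' (Ioo (Real.exp lε) (Real.exp lR)) := rfl
  rw [this]
  exact isOpen_Ioo.preimage continuous_norm

lemma annA_abs_pos {lε lR : ℝ} {z : ℂ} (hz : z ∈ annA lε lR) : 0 < ‖z‖ :=
  lt_trans (Real.exp_pos lε) hz.1

lemma annA_log_mem {lε lR : ℝ} {z : ℂ} (hz : z ∈ annA lε lR) :
    Real.log (‖z‖) ∈ Ioo lε lR := by
  constructor
  · have := Real.log_lt_log (Real.exp_pos lε) hz.1
    rwa [Real.log_exp] at this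
  · have := Real.log_lt_log (annA_abs_pos hz) hz.2
    rwa [Real.log_exp] at this

lemma sin_pos_of_mem {lε lR t : ℝ} (hlt : lε < lR) (ht : t ∈ Ioo lε lR) :
    0 < Real.sin (Real.pi / (lR - lε) * (t - lε)) := by
  have hd : (0:ℝ) < lR - lε := sub_pos.2 hlt
  have hβ : 0 < Real.pi / (lR - lε) := div_pos Real.pi_pos hd
  refine Real.sin_pos_of_pos_of_lt_pi (mul_pos hβ (sub_pos.2 ht.1)) ?_
  have h2 : Real.pi / (lR - lε) * (t - lε) < Real.pi / (lR - lε) * (lR - lε) :=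
    mul_lt_mul_of_pos_left (by linarith [ht.2]) hβ
  rwa [div_mul_cancel₀ _ hd.ne'] at h2

/-- log abs as half log of sum of squares -/
lemma log_abs_eq (w : ℂ) :
    Real.log (‖w‖) = Real.log (w.re ^ 2 + w.im ^ 2) / 2 := by
  rw [Complex.norm_def, Real.log_sqrt (Complex.normSq_nonneg w)]
  congr 1
  rw [Complex.normSq_apply]; ring

noncomputable def Lf (c d s : ℝ) : ℝ := Real.log ((c + s) ^ 2 + d ^ 2) / 2

noncomputable def Gf' (lε β c d s : ℝ) : ℝ :=
  Fb' lε β (Lf c d s) * ((c + s) / ((c + s) ^ 2 + d ^ 2))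

lemma Lf_hasDerivAt {c d s : ℝ} (h : 0 < (c + s) ^ 2 + d ^ 2) :
    HasDerivAt (Lf c d) ((c + s) / ((c + s) ^ 2 + d ^ 2)) s := by
  have h1 : HasDerivAt (fun r : ℝ => (c + r) ^ 2 + d ^ 2) (2 * (c + s)) s := by
    have := (((hasDerivAt_id s).const_add c).pow 2).add_const (d ^ 2)
    refine this.congr_deriv ?_
    simp
  have h2 := (h1.log h.ne').div_const 2
  refine h2.congr_deriv ?_
  field_simp

lemma Gf_hasDerivAt {lε β c d s : ℝ} (h : 0 < (c + s) ^ 2 + d ^ 2)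
    (hsin : Real.sin (β * (Lf c d s - lε)) ≠ 0) :
    HasDerivAt (fun r : ℝ => Fb lε β (Lf c d r)) (Gf' lε β c d s) s :=
  (Fb_hasDerivAt hsin).comp s (Lf_hasDerivAt h)

lemma Gf'_hasDerivAt {lε β c d : ℝ} (h0 : 0 < c ^ 2 + d ^ 2)
    (hsin : Real.sin (β * (Lf c d 0 - lε)) ≠ 0) :
    HasDerivAt (Gf' lε β c d)
      (β ^ 2 / Real.sin (β * (Lf c d 0 - lε)) ^ 2 * (c / (c ^ 2 + d ^ 2)) ^ 2
        + Fb' lε β (Lf c d 0) * ((d ^ 2 - c ^ 2) / (c ^ 2 + d ^ 2) ^ 2)) 0 := by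
  have h0' : 0 < (c + 0) ^ 2 + d ^ 2 := by simpa using h0
  have hL := Lf_hasDerivAt h0'
  have hF2 : HasDerivAt (fun s : ℝ => Fb' lε β (Lf c d s))
      (β ^ 2 / Real.sin (β * (Lf c d 0 - lε)) ^ 2 * ((c + 0) / ((c + 0) ^ 2 + d ^ 2))) 0 :=
    (Fb'_hasDerivAt hsin).comp 0 hL
  have hnum : HasDerivAt (fun s : ℝ => c + s) 1 0 := (hasDerivAt_id 0).const_add c
  have hden : HasDerivAt (fun s : ℝ => (c + s) ^ 2 + d ^ 2) (2 * (c + 0)) 0 := by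
    have := (((hasDerivAt_id 0).const_add c).pow 2).add_const (d ^ 2)
    refine this.congr_deriv ?_
    simp
  have hM : HasDerivAt (fun s : ℝ => (c + s) / ((c + s) ^ 2 + d ^ 2))
      ((1 * ((c + 0) ^ 2 + d ^ 2) - (c + 0) * (2 * (c + 0))) / ((c + 0) ^ 2 + d ^ 2) ^ 2) 0 :=
    hnum.div hden h0'.ne'
  have := hF2.mul hM
  refine this.congr_deriv ?_
  have e0 : c + (0:ℝ) = c := add_zero c
  rw [e0]
  field_simp
  ring

lemma Vb_line_one (lε β : ℝ) (z : ℂ) (r : ℝ) :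
    Vb lε β (z + r • (1:ℂ)) = Fb lε β (Lf z.re z.im r) := by
  have hre : (z + r • (1:ℂ)).re = z.re + r := by
    simp [Complex.real_smul]
  have him : (z + r • (1:ℂ)).im = z.im := by
    simp [Complex.real_smul]
  unfold Vb Lf
  rw [log_abs_eq, hre, him]

lemma Vb_line_I (lε β : ℝ) (z : ℂ) (r : ℝ) :
    Vb lε β (z + r • Complex.I) = Fb lε β (Lf z.im z.re r) := by
  have hre : (z + r • Complex.I).re = z.re := by
    simp [Complex.real_smul]
  have him : (z + r • Complex.I).im = z.im + r := by
    simp [Complex.real_smul]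
  unfold Vb Lf
  rw [log_abs_eq, hre, him]
  congr 2
  ring

lemma Vb_contDiffOn {lε lR : ℝ} (hlt : lε < lR) :
    ContDiffOn ℝ 2 (Vb lε (Real.pi / (lR - lε))) (annA lε lR) := by
  intro z hz
  refine ContDiffAt.contDiffWithinAt ?_
  have habs : ContDiffAt ℝ 2 (fun w : ℂ => ‖w‖) z := by
    have h1 : (fun w : ℂ => ‖w‖) = fun w : ℂ => ‖w‖ := by
      rfl
    rw [h1]
    have hz0 : z ≠ 0 := by
      intro h
      rw [h] at hz
      simp only [annA, mem_setOf_eq, norm_zero] at hz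
      exact absurd hz.1 (not_lt.2 (Real.exp_pos lε).le)
    exact contDiffAt_norm (𝕜 := ℝ) hz0
  have hlog : ContDiffAt ℝ 2 (fun w : ℂ => Real.log (‖w‖)) z :=
    (Real.contDiffAt_log.2 (annA_abs_pos hz).ne').comp z habs
  have hsinp : 0 < Real.sin (Real.pi / (lR - lε) * (Real.log (‖z‖) - lε)) :=
    sin_pos_of_mem hlt (annA_log_mem hz)
  have hsin : ContDiffAt ℝ 2
      (fun w : ℂ => Real.sin (Real.pi / (lR - lε) * (Real.log (‖w‖) - lε))) z :=
    Real.contDiff_sin.contDiffAt.comp z (ContDiffAt.mul contDiffAt_const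
      (hlog.sub contDiffAt_const))
  have hlogsin : ContDiffAt ℝ 2
      (fun w : ℂ => Real.log (Real.sin (Real.pi / (lR - lε) * (Real.log (‖w‖) - lε)))) z :=
    (Real.contDiffAt_log.2 hsinp.ne').comp (g := Real.log) z hsin
  exact (contDiffAt_const.sub hlog).sub hlogsin


lemma Vb_lap_eq {lε lR : ℝ} (hlt : lε < lR) {z : ℂ} (hz : z ∈ annA lε lR) :
    lap (Vb lε (Real.pi / (lR - lε))) z
      = Real.exp (2 * Vb lε (Real.pi / (lR - lε)) z) := by
  set β := Real.pi / (lR - lε) with hβdef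
  have hβ : 0 < β := div_pos Real.pi_pos (sub_pos.2 hlt)
  set x := z.re
  set y := z.im
  have habs : 0 < ‖z‖ := annA_abs_pos hz
  have hρ' : (‖z‖) ^ 2 = x ^ 2 + y ^ 2 := by
    rw [Complex.sq_norm, Complex.normSq_apply]; ring
  have hρ : 0 < x ^ 2 + y ^ 2 := by rw [← hρ']; positivity
  have hL0x : Lf x y 0 = Real.log (‖z‖) := by
    unfold Lf; rw [log_abs_eq]; norm_num; rfl
  have hL0y : Lf y x 0 = Real.log (‖z‖) := by
    unfold Lf; rw [log_abs_eq]; norm_num; ring_nf; rw [add_comm]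
  have hsin0 : 0 < Real.sin (β * (Real.log (‖z‖) - lε)) :=
    sin_pos_of_mem hlt (annA_log_mem hz)
  -- eventual membership facts along both lines
  have hmem1 : ∀ᶠ s : ℝ in 𝓝 0, z + s • (1:ℂ) ∈ annA lε lR := by
    have hc : Continuous (fun s : ℝ => z + s • (1:ℂ)) := by continuity
    have h0 : z + (0:ℝ) • (1:ℂ) ∈ annA lε lR := by simpa using hz
    exact hc.continuousAt.preimage_mem_nhds ((annA_open lε lR).mem_nhds h0)
  have hmemI : ∀ᶠ s : ℝ in 𝓝 0, z + s • Complex.I ∈ annA lε lR := by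
    have hc : Continuous (fun s : ℝ => z + s • Complex.I) := by continuity
    have h0 : z + (0:ℝ) • Complex.I ∈ annA lε lR := by simpa using hz
    exact hc.continuousAt.preimage_mem_nhds ((annA_open lε lR).mem_nhds h0)
  -- generic facts for membership points
  have key : ∀ (w : ℂ), w ∈ annA lε lR →
      0 < (w.re) ^ 2 + (w.im) ^ 2 ∧
      Real.sin (β * (Real.log ((w.re) ^ 2 + (w.im) ^ 2) / 2 - lε)) ≠ 0 := by
    intro w hw
    have habsw : 0 < ‖w‖ := annA_abs_pos hw
    have h1 : (‖w‖) ^ 2 = (w.re) ^ 2 + (w.im) ^ 2 := by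
      rw [Complex.sq_norm, Complex.normSq_apply]; ring
    have h2 : 0 < (w.re) ^ 2 + (w.im) ^ 2 := by rw [← h1]; positivity
    refine ⟨h2, ?_⟩
    have h3 : Real.log ((w.re) ^ 2 + (w.im) ^ 2) / 2 = Real.log (‖w‖) := by
      rw [log_abs_eq]
    rw [h3]
    exact (sin_pos_of_mem hlt (annA_log_mem hw)).ne'
  -- x-direction
  have hit1 : iteratedFDeriv ℝ 2 (Vb lε β) z ![1, 1]
      = β ^ 2 / Real.sin (β * (Lf x y 0 - lε)) ^ 2 * (x / (x ^ 2 + y ^ 2)) ^ 2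
        + Fb' lε β (Lf x y 0) * ((y ^ 2 - x ^ 2) / (x ^ 2 + y ^ 2) ^ 2) := by
    refine iteratedFDeriv_line (annA_open lε lR) (Vb_contDiffOn hlt) hz
      (G' := Gf' lε β x y) ?_ ?_
    · filter_upwards [hmem1] with s hs
      obtain ⟨hp, hq⟩ := key _ hs
      have hre : (z + s • (1:ℂ)).re = x + s := by simp [Complex.real_smul]; rfl
      have him : (z + s • (1:ℂ)).im = y := by simp [Complex.real_smul]; rfl
      rw [hre, him] at hp hq
      have := Gf_hasDerivAt (lε := lε) (β := β) hp (by unfold Lf; exact hq)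
      refine this.congr_of_eventuallyEq ?_
      filter_upwards with r
      exact Vb_line_one lε β z r
    · have hq : Real.sin (β * (Lf x y 0 - lε)) ≠ 0 := by rw [hL0x]; exact hsin0.ne'
      have hp : 0 < x ^ 2 + y ^ 2 := hρ
      exact Gf'_hasDerivAt hp hq
  -- y-direction
  have hitI : iteratedFDeriv ℝ 2 (Vb lε β) z ![Complex.I, Complex.I]
      = β ^ 2 / Real.sin (β * (Lf y x 0 - lε)) ^ 2 * (y / (y ^ 2 + x ^ 2)) ^ 2
        + Fb' lε β (Lf y x 0) * ((x ^ 2 - y ^ 2) / (y ^ 2 + x ^ 2) ^ 2) := by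
    refine iteratedFDeriv_line (annA_open lε lR) (Vb_contDiffOn hlt) hz
      (G' := Gf' lε β y x) ?_ ?_
    · filter_upwards [hmemI] with s hs
      obtain ⟨hp, hq⟩ := key _ hs
      have hre : (z + s • Complex.I).re = x := by simp [Complex.real_smul]; rfl
      have him : (z + s • Complex.I).im = y + s := by simp [Complex.real_smul]; rfl
      rw [hre, him] at hp hq
      have hp' : 0 < (y + s) ^ 2 + x ^ 2 := by linarith [hp]
      have hq' : Real.sin (β * (Lf y x s - lε)) ≠ 0 := by
        unfold Lf
        have : (y + s) ^ 2 + x ^ 2 = x ^ 2 + (y + s) ^ 2 := by ring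
        rw [this]
        exact hq
      have := Gf_hasDerivAt (lε := lε) (β := β) hp' hq'
      refine this.congr_of_eventuallyEq ?_
      filter_upwards with r
      exact Vb_line_I lε β z r
    · have hq : Real.sin (β * (Lf y x 0 - lε)) ≠ 0 := by rw [hL0y]; exact hsin0.ne'
      have hp : 0 < y ^ 2 + x ^ 2 := by linarith [hρ]
      exact Gf'_hasDerivAt hp hq
  unfold lap
  rw [hit1, hitI, hL0x, hL0y]
  have hVb : Vb lε β z = Real.log β - Real.log (‖z‖)
      - Real.log (Real.sin (β * (Real.log (‖z‖) - lε))) := by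
    simp only [Vb, Fb]
  rw [hVb]
  have hexp : Real.exp (2 * (Real.log β - Real.log (‖z‖)
      - Real.log (Real.sin (β * (Real.log (‖z‖) - lε)))))
      = β ^ 2 / ((‖z‖) ^ 2
          * Real.sin (β * (Real.log (‖z‖) - lε)) ^ 2) := by
    rw [two_mul, Real.exp_add, Real.exp_sub, Real.exp_sub,
      Real.exp_log hβ, Real.exp_log habs, Real.exp_log hsin0]
    field_simp
  rw [hexp, hρ']
  have hyx : y ^ 2 + x ^ 2 = x ^ 2 + y ^ 2 := by ring
  rw [hyx]
  have hs := hsin0.ne'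
  field_simp [hρ.ne', hs]
  ring

lemma Fb_tendsto_left {lε lR : ℝ} (hlt : lε < lR) :
    Tendsto (Fb lε (Real.pi / (lR - lε))) (𝓝[>] lε) atTop := by
  set β := Real.pi / (lR - lε) with hβdef
  have hsin : Tendsto (fun t : ℝ => Real.sin (β * (t - lε))) (𝓝[>] lε) (𝓝[>] 0) := by
    rw [tendsto_nhdsWithin_iff]
    constructor
    · have hc : Continuous (fun t : ℝ => Real.sin (β * (t - lε))) := by continuity
      have := (hc.tendsto lε).mono_left (nhdsWithin_le_nhds (s := Ioi lε))
      simpa using this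
    · filter_upwards [Ioo_mem_nhdsGT hlt] with t ht
      exact sin_pos_of_mem hlt ht
  have hlogsin : Tendsto (fun t : ℝ => Real.log (Real.sin (β * (t - lε)))) (𝓝[>] lε) atBot :=
    Real.tendsto_log_nhdsGT_zero.comp hsin
  have hneg : Tendsto (fun t : ℝ => -Real.log (Real.sin (β * (t - lε)))) (𝓝[>] lε) atTop :=
    tendsto_neg_atTop_iff.2 hlogsin
  have hconst : Tendsto (fun t : ℝ => Real.log β - t) (𝓝[>] lε) (𝓝 (Real.log β - lε)) := by
    have hc : Continuous (fun t : ℝ => Real.log β - t) := by continuity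
    exact (hc.tendsto lε).mono_left nhdsWithin_le_nhds
  have heq : Fb lε β = fun t =>
      (Real.log β - t) + (-Real.log (Real.sin (β * (t - lε)))) := by
    funext t; unfold Fb; ring
  rw [heq]
  exact hconst.add_atTop hneg

lemma Fb_tendsto_right {lε lR : ℝ} (hlt : lε < lR) :
    Tendsto (Fb lε (Real.pi / (lR - lε))) (𝓝[<] lR) atTop := by
  set β := Real.pi / (lR - lε) with hβdef
  have hsin : Tendsto (fun t : ℝ => Real.sin (β * (t - lε))) (𝓝[<] lR) (𝓝[>] 0) := by
    rw [tendsto_nhdsWithin_iff]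
    constructor
    · have hc : Continuous (fun t : ℝ => Real.sin (β * (t - lε))) := by continuity
      have h0 : Real.sin (β * (lR - lε)) = 0 := by
        rw [hβdef, div_mul_cancel₀ _ (sub_pos.2 hlt).ne']
        exact Real.sin_pi
      have := (hc.tendsto lR).mono_left (nhdsWithin_le_nhds (s := Iio lR))
      rwa [h0] at this
    · filter_upwards [Ioo_mem_nhdsLT hlt] with t ht
      exact sin_pos_of_mem hlt ht
  have hlogsin : Tendsto (fun t : ℝ => Real.log (Real.sin (β * (t - lε)))) (𝓝[<] lR) atBot :=
    Real.tendsto_log_nhdsGT_zero.comp hsin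
  have hneg : Tendsto (fun t : ℝ => -Real.log (Real.sin (β * (t - lε)))) (𝓝[<] lR) atTop :=
    tendsto_neg_atTop_iff.2 hlogsin
  have hconst : Tendsto (fun t : ℝ => Real.log β - t) (𝓝[<] lR) (𝓝 (Real.log β - lR)) := by
    have hc : Continuous (fun t : ℝ => Real.log β - t) := by continuity
    exact (hc.tendsto lR).mono_left nhdsWithin_le_nhds
  have heq : Fb lε β = fun t =>
      (Real.log β - t) + (-Real.log (Real.sin (β * (t - lε)))) := by
    funext t; unfold Fb; ring
  rw [heq]
  exact hconst.add_atTop hneg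

/-- Sublevel sets of the barrier profile are contained in a compact subinterval. -/
lemma Fb_sublevel {lε lR : ℝ} (hlt : lε < lR) (M : ℝ) :
    ∃ lε' lR', lε < lε' ∧ lε' ≤ lR' ∧ lR' < lR ∧
      ∀ t, t ∈ Ioo lε lR → Fb lε (Real.pi / (lR - lε)) t ≤ M → t ∈ Icc lε' lR' := by
  have h1 := (Fb_tendsto_left hlt).eventually (eventually_gt_atTop M)
  have h2 := (Fb_tendsto_right hlt).eventually (eventually_gt_atTop M)
  obtain ⟨u, hu, hsub1⟩ := mem_nhdsGT_iff_exists_Ioc_subset.1 h1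
  obtain ⟨l, hl, hsub2⟩ := mem_nhdsLT_iff_exists_Ico_subset.1 h2
  refine ⟨min u ((lε + lR) / 2), max l ((lε + lR) / 2), ?_, ?_, ?_, ?_⟩
  · exact lt_min hu (by linarith)
  · exact le_trans (min_le_right _ _) (le_max_right _ _)
  · exact max_lt hl (by linarith)
  · intro t ht hM
    constructor
    · by_contra hcon
      push_neg at hcon
      have htu : t ∈ Ioc lε u := ⟨ht.1, le_of_lt (lt_of_lt_of_le hcon (min_le_left _ _))⟩
      exact absurd hM (not_le.2 (hsub1 htu))
    · by_contra hcon
      push_neg at hcon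
      have htl : t ∈ Ico l lR := ⟨le_of_lt (lt_of_le_of_lt (le_max_left _ _) hcon), ht.2⟩
      exact absurd hM (not_le.2 (hsub2 htl))

lemma annA_subset_punctured {lε lR : ℝ} (hR : lR < 0) :
    annA lε lR ⊆ ball (0:ℂ) 1 \ {0} := by
  intro z hz
  have h1 : ‖z‖ < 1 := by
    have := hz.2
    have h2 : Real.exp lR < 1 := by
      rw [← Real.exp_zero]; exact Real.exp_lt_exp.2 hR
    linarith
  have h2 : z ≠ 0 := by
    intro h
    rw [h] at hz
    simp only [annA, mem_setOf_eq, norm_zero] at hz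
    exact absurd hz.1 (not_lt.2 (Real.exp_pos lε).le)
  constructor
  · rwa [mem_ball_zero_iff]
  · simpa using h2

def clAnn (r s : ℝ) : Set ℂ := {z : ℂ | r ≤ ‖z‖ ∧ ‖z‖ ≤ s}

lemma clAnn_isCompact (r s : ℝ) : IsCompact (clAnn r s) := by
  have : clAnn r s = Metric.closedBall (0:ℂ) s ∩ {z : ℂ | r ≤ ‖z‖} := by
    ext z
    simp only [clAnn, mem_setOf_eq, mem_inter_iff, Metric.mem_closedBall,
      Complex.dist_eq, sub_zero]
    tauto
  rw [this]
  exact (isCompact_closedBall _ _).inter_right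
    (isClosed_le continuous_const continuous_norm)

lemma mem_clAnn_of_log {lε' lR' : ℝ} {z : ℂ} (habs : 0 < ‖z‖)
    (h : Real.log (‖z‖) ∈ Icc lε' lR') :
    z ∈ clAnn (Real.exp lε') (Real.exp lR') := by
  constructor
  · calc Real.exp lε' ≤ Real.exp (Real.log (‖z‖)) := Real.exp_le_exp.2 h.1
    _ = ‖z‖ := Real.exp_log habs
  · calc ‖z‖ = Real.exp (Real.log (‖z‖)) := (Real.exp_log habs).symm
    _ ≤ Real.exp lR' := Real.exp_le_exp.2 h.2

lemma clAnn_subset_annA {lε lR lε' lR' : ℝ} (h1 : lε < lε') (h3 : lR' < lR) :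
    clAnn (Real.exp lε') (Real.exp lR') ⊆ annA lε lR := by
  intro z hz
  exact ⟨lt_of_lt_of_le (Real.exp_lt_exp.2 h1) hz.1,
    lt_of_le_of_lt hz.2 (Real.exp_lt_exp.2 h3)⟩

/-- Elliptic comparison: a subsolution is dominated by the annulus barrier. -/
lemma elliptic_comparison {lε lR : ℝ} (hlt : lε < lR) (hR : lR < 0)
    {a : ℂ → ℝ}
    (ha : ContDiffOn ℝ (⊤ : ℕ∞) a (ball (0:ℂ) 1 \ {0}))
    (hK : ∀ z ∈ ball (0:ℂ) 1 \ {0}, Real.exp (2 * a z) ≤ lap a z) :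
    ∀ z ∈ annA lε lR, a z ≤ Vb lε (Real.pi / (lR - lε)) z := by
  set β := Real.pi / (lR - lε) with hβdef
  by_contra hcon
  push_neg at hcon
  obtain ⟨z₀, hz₀, hz₀v⟩ := hcon
  -- bound of a on the closed annulus
  have hclsub : clAnn (Real.exp lε) (Real.exp lR) ⊆ ball (0:ℂ) 1 \ {0} := by
    intro z hz
    have habs : 0 < ‖z‖ := lt_of_lt_of_le (Real.exp_pos lε) hz.1
    have h1 : ‖z‖ < 1 := by
      have h2 : Real.exp lR < 1 := by
        rw [← Real.exp_zero]; exact Real.exp_lt_exp.2 hR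
      linarith [hz.2]
    refine ⟨by rwa [mem_ball_zero_iff], ?_⟩
    simp only [mem_singleton_iff]
    intro h
    rw [h] at habs; simp at habs
  obtain ⟨C, hC⟩ := (clAnn_isCompact (Real.exp lε) (Real.exp lR)).exists_bound_of_continuousOn
    (ha.continuousOn.mono hclsub)
  have hCa : ∀ z ∈ clAnn (Real.exp lε) (Real.exp lR), a z ≤ C := by
    intro z hz
    have := hC z hz
    rw [Real.norm_eq_abs] at this
    exact le_trans (le_abs_self _) this
  obtain ⟨lε', lR', h1, h2, h3, hsub⟩ := Fb_sublevel hlt C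
  set K := clAnn (Real.exp lε') (Real.exp lR') with hKdef
  have hKsub : K ⊆ annA lε lR := clAnn_subset_annA h1 h3
  have hannsub : annA lε lR ⊆ clAnn (Real.exp lε) (Real.exp lR) := by
    intro z hz; exact ⟨hz.1.le, hz.2.le⟩
  -- membership criterion
  have hcrit : ∀ w ∈ annA lε lR, C < a w → w ∈ (∅ : Set ℂ) → False := fun _ _ _ h => h.elim
  have hmemK : ∀ w ∈ annA lε lR, Vb lε β w < a w → w ∈ K := by
    intro w hw hvw
    have haw : a w ≤ C := hCa w (hannsub hw)
    have hVb : Fb lε β (Real.log (‖w‖)) ≤ C := le_trans hvw.le haw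
    have := hsub _ (annA_log_mem hw) hVb
    exact mem_clAnn_of_log (annA_abs_pos hw) this
  have hz₀K : z₀ ∈ K := hmemK z₀ hz₀ hz₀v
  -- max of a - Vb on K
  have hcont : ContinuousOn (fun w => a w - Vb lε β w) K :=
    (ha.continuousOn.mono (hKsub.trans (annA_subset_punctured hR))).sub
      ((Vb_contDiffOn hlt).continuousOn.mono hKsub)
  obtain ⟨p, hpK, hpmax⟩ := (clAnn_isCompact _ _).exists_isMaxOn ⟨z₀, hz₀K⟩ hcont
  have hpannA : p ∈ annA lε lR := hKsub hpK
  have hval : 0 < a p - Vb lε β p := by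
    have h0 : a z₀ - Vb lε β z₀ ≤ a p - Vb lε β p := hpmax hz₀K
    linarith
  have hglob : ∀ w ∈ annA lε lR, a w - Vb lε β w ≤ a p - Vb lε β p := by
    intro w hw
    by_cases hwK : w ∈ K
    · exact hpmax hwK
    · by_contra hcon2
      push_neg at hcon2
      have : Vb lε β w < a w := by linarith
      exact hwK (hmemK w hw this)
  have hloc : IsLocalMax (fun w => a w - Vb lε β w) p := by
    refine Filter.eventually_of_mem ((annA_open lε lR).mem_nhds hpannA) ?_
    intro w hw
    exact hglob w hw
  have ha2 : ContDiffOn ℝ 2 a (annA lε lR) :=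
    (ha.of_le (WithTop.coe_le_coe.2 (le_top : (2:ℕ∞) ≤ ⊤))).mono (annA_subset_punctured hR)
  have hlap := lap_le_of_localMax (annA_open lε lR) ha2 (Vb_contDiffOn hlt) hpannA hloc
  rw [Vb_lap_eq hlt hpannA] at hlap
  have hKp := hK p (annA_subset_punctured hR hpannA)
  have : Real.exp (2 * a p) ≤ Real.exp (2 * Vb lε β p) := le_trans hKp hlap
  have := Real.exp_le_exp.1 this
  linarith

/-- Parabolic comparison on the annulus. -/
lemma parabolic_comparison {lε lR T : ℝ} (hlt : lε < lR) (hR : lR < 0) (hT : 0 < T)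
    {u : ℂ → ℝ → ℝ}
    (hu : ContDiffOn ℝ (⊤ : ℕ∞) (fun p : ℂ × ℝ => u p.1 p.2) (ball (0:ℂ) 1 ×ˢ Icc 0 T))
    (heq : ∀ z ∈ ball (0:ℂ) 1, ∀ t ∈ Icc (0:ℝ) T,
      HasDerivWithinAt (u z) (Real.exp (-2 * u z t) * lap (fun w => u w t) z) (Icc 0 T) t)
    (hinitV : ∀ z ∈ annA lε lR, u z 0 ≤ Vb lε (Real.pi / (lR - lε)) z) :
    ∀ z ∈ annA lε lR, ∀ t ∈ Icc (0:ℝ) T,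
      u z t ≤ Vb lε (Real.pi / (lR - lε)) z + (1/2) * Real.log (1 + 2*t) := by
  set β := Real.pi / (lR - lε) with hβdef
  have hannball : annA lε lR ⊆ ball (0:ℂ) 1 :=
    fun z hz => ((annA_subset_punctured hR) hz).1
  by_contra hcon
  push_neg at hcon
  obtain ⟨z₀, hz₀, s₀, hs₀, hval₀⟩ := hcon
  -- bound of u on closed annulus × time
  have hclsub : clAnn (Real.exp lε) (Real.exp lR) ×ˢ Icc (0:ℝ) T ⊆ ball (0:ℂ) 1 ×ˢ Icc 0 T := by
    refine prod_mono ?_ (le_refl _)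
    intro z hz
    have h2 : Real.exp lR < 1 := by
      rw [← Real.exp_zero]; exact Real.exp_lt_exp.2 hR
    rw [mem_ball_zero_iff]
    linarith [hz.2]
  have hclcomp : IsCompact (clAnn (Real.exp lε) (Real.exp lR) ×ˢ Icc (0:ℝ) T) :=
    (clAnn_isCompact _ _).prod isCompact_Icc
  obtain ⟨C, hC⟩ := hclcomp.exists_bound_of_continuousOn (hu.continuousOn.mono hclsub)
  have hCu : ∀ z ∈ clAnn (Real.exp lε) (Real.exp lR), ∀ t ∈ Icc (0:ℝ) T, u z t ≤ C := by
    intro z hz t ht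
    have := hC (z, t) (mk_mem_prod hz ht)
    rw [Real.norm_eq_abs] at this
    exact le_trans (le_abs_self _) this
  obtain ⟨lε', lR', h1, h2, h3, hsub⟩ := Fb_sublevel hlt C
  set K := clAnn (Real.exp lε') (Real.exp lR') with hKdef
  have hKsub : K ⊆ annA lε lR := clAnn_subset_annA h1 h3
  have hannsub : annA lε lR ⊆ clAnn (Real.exp lε) (Real.exp lR) := by
    intro z hz; exact ⟨hz.1.le, hz.2.le⟩
  have hlogt : ∀ t : ℝ, t ∈ Icc (0:ℝ) T → 0 ≤ Real.log (1 + 2*t) := by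
    intro t ht
    apply Real.log_nonneg
    linarith [ht.1]
  have hmemK : ∀ w ∈ annA lε lR, ∀ t ∈ Icc (0:ℝ) T,
      Vb lε β w + (1/2) * Real.log (1 + 2*t) < u w t → w ∈ K := by
    intro w hw t ht hvw
    have haw : u w t ≤ C := hCu w (hannsub hw) t ht
    have hVb : Fb lε β (Real.log (‖w‖)) ≤ C := by
      have := hlogt t ht
      have hvb : Vb lε β w ≤ C := by linarith
      exact hvb
    exact mem_clAnn_of_log (annA_abs_pos hw) (hsub _ (annA_log_mem hw) hVb)
  have hz₀K : z₀ ∈ K := hmemK z₀ hz₀ s₀ hs₀ hval₀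
  -- the function g and its max on K × [0,T]
  set g : ℂ × ℝ → ℝ :=
    fun p => u p.1 p.2 - Vb lε β p.1 - (1/2) * Real.log (1 + 2*p.2) with hgdef
  have huK : ContinuousOn (fun p : ℂ × ℝ => u p.1 p.2) (K ×ˢ Icc (0:ℝ) T) :=
    hu.continuousOn.mono
      (prod_mono (fun z hz => hannball (hKsub hz)) (fun t ht => ht))
  have hVbK : ContinuousOn (fun p : ℂ × ℝ => Vb lε β p.1) (K ×ˢ Icc (0:ℝ) T) := by
    refine ContinuousOn.comp (g := Vb lε β) (f := Prod.fst)
      ((Vb_contDiffOn hlt).continuousOn.mono hKsub) continuousOn_fst ?_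
    intro p hp
    exact hp.1
  have hlogK : ContinuousOn (fun p : ℂ × ℝ => Real.log (1 + 2*p.2)) (K ×ˢ Icc (0:ℝ) T) := by
    intro p hp
    refine ContinuousAt.continuousWithinAt ?_
    have hpos : (0:ℝ) < 1 + 2*p.2 := by
      have := hp.2.1
      linarith
    exact ContinuousAt.comp (x := p) (g := Real.log) (f := fun p : ℂ × ℝ => 1 + 2*p.2)
      (Real.continuousAt_log hpos.ne') (by fun_prop)
  have hgcont : ContinuousOn g (K ×ˢ Icc (0:ℝ) T) :=
    (huK.sub hVbK).sub (continuousOn_const.mul hlogK)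
  have hKTcomp : IsCompact (K ×ˢ Icc (0:ℝ) T) := (clAnn_isCompact _ _).prod isCompact_Icc
  obtain ⟨q, hqK, hqmax⟩ :=
    hKTcomp.exists_isMaxOn ⟨(z₀, s₀), mk_mem_prod hz₀K hs₀⟩ hgcont
  have hq1 : q.1 ∈ K := hqK.1
  have hq2 : q.2 ∈ Icc (0:ℝ) T := hqK.2
  have hq1A : q.1 ∈ annA lε lR := hKsub hq1
  have hgq_pos : 0 < g q := by
    have h0 : g (z₀, s₀) ≤ g q := hqmax (mk_mem_prod hz₀K hs₀)
    have h1 : 0 < g (z₀, s₀) := by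
      simp only [hgdef]
      linarith
    linarith
  have hglob : ∀ w ∈ annA lε lR, ∀ t ∈ Icc (0:ℝ) T, g (w, t) ≤ g q := by
    intro w hw t ht
    by_cases hwK : w ∈ K
    · exact hqmax (mk_mem_prod hwK ht)
    · have hle : g (w, t) ≤ 0 := by
        by_contra hcon2
        push_neg at hcon2
        have : Vb lε β w + (1/2) * Real.log (1 + 2*t) < u w t := by
          simp only [hgdef] at hcon2
          linarith
        exact hwK (hmemK w hw t ht this)
      linarith
  have ht₀pos : 0 < q.2 := by
    rcases lt_or_eq_of_le hq2.1 with h | h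
    · exact h
    · exfalso
      have hgq : 0 < u q.1 q.2 - Vb lε β q.1 - (1/2) * Real.log (1 + 2*q.2) := by
        simpa only [hgdef] using hgq_pos
      rw [← h] at hgq
      norm_num at hgq
      linarith [hinitV q.1 hq1A]
  -- spatial local max
  have hloc : IsLocalMax (fun w => u w q.2 - Vb lε β w) q.1 := by
    refine Filter.eventually_of_mem ((annA_open lε lR).mem_nhds hq1A) ?_
    intro w hw
    have := hglob w hw q.2 hq2
    simp only [hgdef] at this
    simp only []
    linarith
  have hu_slice : ContDiffOn ℝ 2 (fun w : ℂ => u w q.2) (annA lε lR) := by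
    have hmap : MapsTo (fun w : ℂ => (w, q.2)) (annA lε lR) (ball (0:ℂ) 1 ×ˢ Icc (0:ℝ) T) :=
      fun w hw => mk_mem_prod (hannball hw) hq2
    have hcd : ContDiffOn ℝ 2 (fun w : ℂ => (w, q.2)) (annA lε lR) :=
      (contDiff_id.prodMk contDiff_const).contDiffOn
    have := ContDiffOn.comp (hu.of_le (WithTop.coe_le_coe.2 (le_top : (2:ℕ∞) ≤ ⊤))) hcd hmap
    exact this
  have hlap := lap_le_of_localMax (annA_open lε lR) hu_slice (Vb_contDiffOn hlt) hq1A hloc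
  rw [Vb_lap_eq hlt hq1A] at hlap
  -- time derivative
  have hc := heq q.1 (hannball hq1A) q.2 hq2
  have hpos2 : (0:ℝ) < 1 + 2*q.2 := by linarith [hq2.1]
  have hlogd : HasDerivAt (fun t : ℝ => (1/2) * Real.log (1 + 2*t))
      ((1/2) * (2 / (1 + 2*q.2))) q.2 := by
    have hinner : HasDerivAt (fun t : ℝ => 1 + 2*t) 2 q.2 := by
      simpa using ((hasDerivAt_id q.2).const_mul 2).const_add 1
    exact (hinner.log hpos2.ne').const_mul (1/2)
  have hφ : HasDerivWithinAt
      (fun t => u q.1 t - Vb lε β q.1 - (1/2) * Real.log (1 + 2*t))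
      (Real.exp (-2 * u q.1 q.2) * lap (fun w => u w q.2) q.1 - (1/2) * (2 / (1 + 2*q.2)))
      (Icc 0 q.2) q.2 :=
    (((hc.sub_const (Vb lε β q.1)).sub hlogd.hasDerivWithinAt).mono
      (Icc_subset_Icc le_rfl hq2.2))
  have hmax_t : ∀ t ∈ Icc (0:ℝ) q.2,
      u q.1 t - Vb lε β q.1 - (1/2) * Real.log (1 + 2*t)
        ≤ u q.1 q.2 - Vb lε β q.1 - (1/2) * Real.log (1 + 2*q.2) := by
    intro t ht
    have htT : t ∈ Icc (0:ℝ) T := ⟨ht.1, le_trans ht.2 hq2.2⟩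
    have := hglob q.1 hq1A t htT
    simp only [hgdef] at this
    linarith
  have h0c := right_endpoint_deriv_nonneg ht₀pos hmax_t hφ
  -- final contradiction
  have hexpc : Real.exp (-2 * u q.1 q.2) * lap (fun w => u w q.2) q.1
      ≤ Real.exp (-2 * u q.1 q.2) * Real.exp (2 * Vb lε β q.1) :=
    mul_le_mul_of_nonneg_left hlap (Real.exp_nonneg _)
  have hprod : Real.exp (-2 * u q.1 q.2) * Real.exp (2 * Vb lε β q.1)
      = Real.exp (2 * Vb lε β q.1 - 2 * u q.1 q.2) := by
    rw [← Real.exp_add]; ring_nf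
  have hlt2 : 2 * Vb lε β q.1 - 2 * u q.1 q.2 < -Real.log (1 + 2*q.2) := by
    simp only [hgdef] at hgq_pos
    linarith
  have hexplt : Real.exp (2 * Vb lε β q.1 - 2 * u q.1 q.2) < (1 + 2*q.2)⁻¹ := by
    have := Real.exp_lt_exp.2 hlt2
    rwa [Real.exp_neg, Real.exp_log hpos2] at this
  have heqD : (1/2) * (2 / (1 + 2*q.2)) = (1 + 2*q.2)⁻¹ := by
    field_simp
  linarith

/-- if `Δa ≥ e^{2a}` on the punctured disc and `u` is a smooth solution of the
Ricci flow equation `∂u/∂t = e^{-2u}Δu` on `D × [0,T]` with `u(·,0) ≤ a`, then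
`u(z,t) ≤ -ln(|z|·(-ln|z|)) + ½ ln(1+2t)`. -/
theorem stmt1 (a : ℂ → ℝ)
    (ha : ContDiffOn ℝ (⊤ : ℕ∞) a (ball (0:ℂ) 1 \ {0}))
    (hK : ∀ z ∈ ball (0:ℂ) 1 \ {0}, Real.exp (2 * a z) ≤ lap a z)
    (T : ℝ) (hT : 0 < T) (u : ℂ → ℝ → ℝ)
    (hu : ContDiffOn ℝ (⊤ : ℕ∞) (fun p : ℂ × ℝ => u p.1 p.2) (ball (0:ℂ) 1 ×ˢ Icc 0 T))
    (heq : ∀ z ∈ ball (0:ℂ) 1, ∀ t ∈ Icc (0:ℝ) T,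
      HasDerivWithinAt (u z) (Real.exp (-2 * u z t) * lap (fun w => u w t) z) (Icc 0 T) t)
    (hinit : ∀ z ∈ ball (0:ℂ) 1 \ {0}, u z 0 ≤ a z) :
    ∀ z ∈ ball (0:ℂ) 1 \ {0}, ∀ t ∈ Icc (0:ℝ) T,
      u z t ≤ -Real.log (‖z‖ * (-Real.log (‖z‖)))
        + (1/2) * Real.log (1 + 2*t) := by
  intro z hz t ht
  have hz0 : z ≠ 0 := by simpa using hz.2
  have habs : 0 < ‖z‖ := norm_pos_iff.2 hz0
  have habs1 : ‖z‖ < 1 := by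
    have := hz.1
    rwa [mem_ball_zero_iff] at this
  set L := Real.log (‖z‖) with hLdef
  have hL : L < 0 := Real.log_neg habs habs1
  set lε : ℕ → ℝ := fun n => L - ((n:ℝ) + 1) with hlεdef
  set lR : ℕ → ℝ := fun n => L / ((n:ℝ) + 2) with hlRdef
  have hfacts : ∀ n : ℕ, lε n < L ∧ L < lR n ∧ lR n < 0 := by
    intro n
    have hn1 : (0:ℝ) < (n:ℝ) + 1 := by positivity
    have hn2 : (0:ℝ) < (n:ℝ) + 2 := by positivity
    refine ⟨by simp only [hlεdef]; linarith, ?_, ?_⟩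
    · rw [hlRdef]
      rw [lt_div_iff₀ hn2]
      nlinarith
    · exact div_neg_of_neg_of_pos hL hn2
  have hmem : ∀ n, z ∈ annA (lε n) (lR n) := by
    intro n
    obtain ⟨h1, h2, _⟩ := hfacts n
    constructor
    · calc Real.exp (lε n) < Real.exp L := Real.exp_lt_exp.2 h1
      _ = ‖z‖ := Real.exp_log habs
    · calc ‖z‖ = Real.exp L := (Real.exp_log habs).symm
      _ < Real.exp (lR n) := Real.exp_lt_exp.2 h2
  set β : ℕ → ℝ := fun n => Real.pi / (lR n - lε n) with hβdef
  have hbound : ∀ n, u z t ≤ Fb (lε n) (β n) L + (1/2) * Real.log (1 + 2*t) := by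
    intro n
    obtain ⟨h1, h2, h3⟩ := hfacts n
    have hlt : lε n < lR n := lt_trans h1 h2
    have hell := elliptic_comparison hlt h3 ha hK
    have hinitV : ∀ w ∈ annA (lε n) (lR n),
        u w 0 ≤ Vb (lε n) (Real.pi / (lR n - lε n)) w := fun w hw =>
      le_trans (hinit w (annA_subset_punctured h3 hw)) (hell w hw)
    have := parabolic_comparison hlt h3 hT hu heq hinitV z (hmem n) t ht
    simpa only [Vb, hLdef, hβdef] using this
  -- limit analysis
  have hltn : ∀ n, lε n < lR n := fun n => lt_trans (hfacts n).1 (hfacts n).2.1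
  have hβpos : ∀ n, 0 < β n := fun n => div_pos Real.pi_pos (sub_pos.2 (hltn n))
  set d : ℕ → ℝ := fun n => L - lR n with hddef
  set x : ℕ → ℝ := fun n => β n * d n with hxdef
  have hdneg : ∀ n, d n < 0 := fun n => sub_neg.2 (hfacts n).2.1
  have hxneg : ∀ n, x n < 0 := fun n => mul_neg_of_pos_of_neg (hβpos n) (hdneg n)
  have hθ : ∀ n, β n * (L - lε n) = Real.pi + x n := by
    intro n
    have hne : lR n - lε n ≠ 0 := (sub_pos.2 (hltn n)).ne'
    have : β n * (L - lε n) = β n * (lR n - lε n) + β n * d n := by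
      simp only [hddef]; ring
    rw [this, hβdef]
    rw [div_mul_cancel₀ _ hne]
  have hsinθ : ∀ n, Real.sin (β n * (L - lε n)) = -Real.sin (x n) := by
    intro n
    rw [hθ n, Real.sin_add, Real.sin_pi, Real.cos_pi]
    ring
  have hsinθpos : ∀ n, 0 < Real.sin (β n * (L - lε n)) := by
    intro n
    exact sin_pos_of_mem (hltn n) ⟨(hfacts n).1, (hfacts n).2.1⟩
  -- pointwise rewrite of the bound
  have hrw : ∀ n, Fb (lε n) (β n) L
      = -L - Real.log (Real.sin (β n * (L - lε n)) / β n) := by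
    intro n
    unfold Fb
    rw [Real.log_div (hsinθpos n).ne' (hβpos n).ne']
    ring
  have key : ∀ (b dd s : ℝ), b ≠ 0 → dd ≠ 0 → (-s)/b = (-dd) * (s/(b*dd)) := by
    intro b dd s hb hdd
    field_simp
  have hratio : ∀ n, Real.sin (β n * (L - lε n)) / β n
      = (-d n) * (Real.sin (x n) / x n) := by
    intro n
    rw [hsinθ n]
    have hxn : x n = β n * d n := rfl
    rw [hxn]
    exact key _ _ _ (hβpos n).ne' (hdneg n).ne
  -- tendsto facts
  have hLn2 : Tendsto (fun n : ℕ => L / ((n:ℝ) + 2)) atTop (𝓝 0) := by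
    refine Tendsto.div_atTop tendsto_const_nhds ?_
    exact tendsto_atTop_add_const_right _ 2 tendsto_natCast_atTop_atTop
  have hden : Tendsto (fun n : ℕ => lR n - lε n) atTop atTop := by
    have h1 : Tendsto (fun n : ℕ => (n:ℝ) + 1) atTop atTop :=
      tendsto_atTop_add_const_right _ 1 tendsto_natCast_atTop_atTop
    have h2 : Tendsto (fun n : ℕ => L / ((n:ℝ) + 2) - L) atTop (𝓝 (0 - L)) :=
      hLn2.sub tendsto_const_nhds
    have h3 := h1.atTop_add h2
    refine h3.congr ?_
    intro n
    simp only [hlRdef, hlεdef]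
    ring
  have hβ0 : Tendsto β atTop (𝓝 0) := Tendsto.div_atTop tendsto_const_nhds hden
  have hd : Tendsto d atTop (𝓝 L) := by
    have h0 : Tendsto (fun n : ℕ => L - L/((n:ℝ)+2)) atTop (𝓝 (L - 0)) :=
      tendsto_const_nhds.sub hLn2
    rw [sub_zero] at h0
    refine h0.congr ?_
    intro n
    simp only [hddef, hlRdef]
  have hx0 : Tendsto x atTop (𝓝 0) := by
    have := hβ0.mul hd
    simpa using this
  have hx0' : Tendsto x atTop (𝓝[≠] (0:ℝ)) := by
    rw [tendsto_nhdsWithin_iff]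
    exact ⟨hx0, Eventually.of_forall fun n => (hxneg n).ne⟩
  have hslope : Tendsto (fun s : ℝ => Real.sin s / s) (𝓝[≠] (0:ℝ)) (𝓝 1) := by
    have h := Real.hasDerivAt_sin 0
    rw [hasDerivAt_iff_tendsto_slope] at h
    rw [Real.cos_zero] at h
    refine h.congr ?_
    intro s
    rw [slope_def_field]
    simp
  have hsx : Tendsto (fun n => Real.sin (x n) / x n) atTop (𝓝 1) := hslope.comp hx0'
  have hmain : Tendsto (fun n => Real.sin (β n * (L - lε n)) / β n) atTop (𝓝 (-L)) := by
    have h1 : Tendsto (fun n => (-d n) * (Real.sin (x n) / x n)) atTop (𝓝 ((-L) * 1)) :=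
      hd.neg.mul hsx
    rw [mul_one] at h1
    exact h1.congr fun n => (hratio n).symm
  have hnegL : (0:ℝ) < -L := neg_pos.2 hL
  have hlog : Tendsto (fun n => Real.log (Real.sin (β n * (L - lε n)) / β n)) atTop
      (𝓝 (Real.log (-L))) :=
    ((Real.continuousAt_log hnegL.ne').tendsto).comp hmain
  have hfinal : Tendsto (fun n => Fb (lε n) (β n) L + (1/2) * Real.log (1 + 2*t)) atTop
      (𝓝 ((-L - Real.log (-L)) + (1/2) * Real.log (1 + 2*t))) := by
    have h1 : Tendsto (fun n => -L - Real.log (Real.sin (β n * (L - lε n)) / β n)) atTop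
        (𝓝 (-L - Real.log (-L))) := tendsto_const_nhds.sub hlog
    have h2 := h1.add (tendsto_const_nhds :
      Tendsto (fun _ : ℕ => (1/2) * Real.log (1 + 2*t)) atTop (𝓝 ((1/2) * Real.log (1 + 2*t))))
    refine h2.congr ?_
    intro n
    rw [hrw n]
  have hle : u z t ≤ (-L - Real.log (-L)) + (1/2) * Real.log (1 + 2*t) :=
    ge_of_tendsto' hfinal hbound
  have htarget : -Real.log (‖z‖ * (-L)) = -L - Real.log (-L) := by
    rw [Real.log_mul habs.ne' hnegL.ne', ← hLdef]
    ring
  rw [htarget]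
  exact hle
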